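/- arXiv:1602.06315 — 4 statements merged into one kernel-verified Lean document; each statement's English description precedes it below -/
import Mathlib

section
/- For all real numbers p, q with 0 < q < p, all real numbers a, b, x, y, and every natural number n, one has ∏_{j=0}^{n−1} (p^j·a·x + q^j·b·y) = ∑_{k=0}^{n} C(n,k)_{p,q} · p^{(n−k)(n−k−1)/2} · q^{k(k−1)/2} · a^{n−k} · b^k · x^{n−k} · y^k. -/
open Finset

/-- The (p,q)-integer `[k]_{p,q} = (p^k - q^k)/(p - q)`. -/
noncomputable def pqInt (p q : ℝ) (k : ℕ) : ℝ := (p ^ k - q ^ k) / (p - q)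

/-- The (p,q)-factorial `[n]_{p,q}! = ∏_{k=1}^n [k]_{p,q}`. -/
noncomputable def pqFact (p q : ℝ) (n : ℕ) : ℝ := ∏ k ∈ Finset.Icc 1 n, pqInt p q k

/-- The (p,q)-binomial coefficient `C(n,k)_{p,q}`. -/
noncomputable def pqBinom (p q : ℝ) (n k : ℕ) : ℝ :=
  pqFact p q n / (pqFact p q k * pqFact p q (n - k))

/-- The (p,q)-Schurer basis function `s_{n,l,ν}^{p,q}(x)`. -/
noncomputable def schurerBasis (p q : ℝ) (n l ν : ℕ) (x : ℝ) : ℝ :=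
  (1 / p ^ ((n + l) * (n + l - 1) / 2)) * pqBinom p q (n + l) ν *
    p ^ (ν * (ν - 1) / 2) * x ^ ν * ∏ j ∈ Finset.range (n + l - ν), (p ^ j - q ^ j * x)

/-- The Stancu node `T(ν) = (p^{n-ν}·[ν]_{p,q} + α)/([n]_{p,q} + β)`. -/
noncomputable def stancuNode (p q α β : ℝ) (n ν : ℕ) : ℝ :=
  (p ^ ((n : ℤ) - (ν : ℤ)) * pqInt p q ν + α) / (pqInt p q n + β)

/-- The bivariate (p,q)-Schurer–Stancu operator. -/
noncomputable def schurerStancu (n₁ n₂ l : ℕ) (p₁ q₁ α₁ β₁ p₂ q₂ α₂ β₂ : ℝ)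
    (f : ℝ → ℝ → ℝ) (x₁ x₂ : ℝ) : ℝ :=
  ∑ ν₁ ∈ Finset.range (n₁ + l + 1), ∑ ν₂ ∈ Finset.range (n₂ + l + 1),
    schurerBasis p₁ q₁ n₁ l ν₁ x₁ * schurerBasis p₂ q₂ n₂ l ν₂ x₂ *
      f (stancuNode p₁ q₁ α₁ β₁ n₁ ν₁) (stancuNode p₂ q₂ α₂ β₂ n₂ ν₂)

lemma pqInt_pos {p q : ℝ} (hq : 0 < q) (hqp : q < p) {k : ℕ} (hk : 1 ≤ k) :
    0 < pqInt p q k := by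
  have h1 : q ^ k < p ^ k := pow_lt_pow_left₀ hqp hq.le (by omega)
  exact div_pos (by linarith) (by linarith)

lemma pqFact_pos {p q : ℝ} (hq : 0 < q) (hqp : q < p) (n : ℕ) :
    0 < pqFact p q n :=
  Finset.prod_pos fun k hk => pqInt_pos hq hqp (Finset.mem_Icc.mp hk).1

lemma pqFact_zero (p q : ℝ) : pqFact p q 0 = 1 := by simp [pqFact]

lemma pqFact_succ (p q : ℝ) (n : ℕ) :
    pqFact p q (n + 1) = pqFact p q n * pqInt p q (n + 1) := by
  unfold pqFact
  rw [Finset.prod_Icc_succ_top (by omega)]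

lemma pqInt_add (p q : ℝ) (hne : p - q ≠ 0) (a b : ℕ) :
    pqInt p q (a + b) = p ^ a * pqInt p q b + q ^ b * pqInt p q a := by
  unfold pqInt
  rw [pow_add p a b, pow_add q a b]
  field_simp
  ring

lemma pqBinom_self {p q : ℝ} (hq : 0 < q) (hqp : q < p) (n : ℕ) :
    pqBinom p q n n = 1 := by
  unfold pqBinom
  rw [Nat.sub_self, pqFact_zero, mul_one]
  exact div_self (ne_of_gt (pqFact_pos hq hqp n))

lemma pqBinom_zero {p q : ℝ} (hq : 0 < q) (hqp : q < p) (n : ℕ) :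
    pqBinom p q n 0 = 1 := by
  unfold pqBinom
  rw [Nat.sub_zero, pqFact_zero, one_mul]
  exact div_self (ne_of_gt (pqFact_pos hq hqp n))

lemma pqBinom_pascal {p q : ℝ} (hq : 0 < q) (hqp : q < p) {n k : ℕ} (hk : k + 1 ≤ n) :
    pqBinom p q (n + 1) (k + 1) =
      p ^ (k + 1) * pqBinom p q n (k + 1) + q ^ (n - k) * pqBinom p q n k := by
  obtain ⟨m, rfl⟩ : ∃ m, n = k + 1 + m := ⟨n - (k + 1), by omega⟩
  have e1 : (k + 1 + m + 1) - (k + 1) = m + 1 := by omega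
  have e2 : (k + 1 + m) - (k + 1) = m := by omega
  have e3 : (k + 1 + m) - k = m + 1 := by omega
  unfold pqBinom
  rw [e1, e2, e3]
  rw [show k + 1 + m + 1 = (k + 1 + m) + 1 from rfl, pqFact_succ,
    pqFact_succ p q m, pqFact_succ p q k,
    show (k + 1 + m) + 1 = (k + 1) + (m + 1) from by ring,
    pqInt_add p q (sub_ne_zero.mpr (ne_of_gt hqp)) (k + 1) (m + 1)]
  have hFk := ne_of_gt (pqFact_pos hq hqp k)
  have hFm := ne_of_gt (pqFact_pos hq hqp m)
  have hik := ne_of_gt (pqInt_pos hq hqp (k := k + 1) (by omega))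
  have him := ne_of_gt (pqInt_pos hq hqp (k := m + 1) (by omega))
  field_simp

lemma tri_succ (n : ℕ) : (n + 1) * n / 2 = n * (n - 1) / 2 + n := by
  obtain ⟨c, hc⟩ : ∃ c, n * (n - 1) = 2 * c := by
    rcases Nat.even_or_odd n with h | h
    · obtain ⟨r, hr⟩ := h; exact ⟨r * (n - 1), by rw [hr]; ring⟩
    · rcases n with _ | m
      · exact ⟨0, rfl⟩
      · obtain ⟨r, hr⟩ := Nat.Odd.sub_odd h odd_one
        exact ⟨(m + 1) * r, by simpa [hr] using by ring⟩
  have hh : (n + 1) * n = n * (n - 1) + 2 * n := by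
    rcases n with _ | m
    · rfl
    · simp only [Nat.add_sub_cancel]; ring
  omega

noncomputable def pqTerm (p q A B : ℝ) (n k : ℕ) : ℝ :=
  if k ≤ n then
    pqBinom p q n k * p ^ ((n - k) * (n - k - 1) / 2) * q ^ (k * (k - 1) / 2) *
      A ^ (n - k) * B ^ k
  else 0

lemma pqTerm_key {p q : ℝ} (hq : 0 < q) (hqp : q < p) (A B : ℝ) {n k : ℕ} (hk : k ≤ n) :
    pqTerm p q A B (n + 1) (k + 1)
      = p ^ n * A * pqTerm p q A B n (k + 1) + q ^ n * B * pqTerm p q A B n k := by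
  rcases eq_or_lt_of_le hk with rfl | hlt
  · -- k = n case
    unfold pqTerm
    rw [if_pos (le_refl (k + 1)), if_neg (by omega), if_pos (le_refl k)]
    rw [pqBinom_self hq hqp, pqBinom_self hq hqp, Nat.sub_self, Nat.sub_self]
    simp only [Nat.add_sub_cancel, mul_zero, zero_mul]
    simp only [Nat.add_sub_cancel, tri_succ k, pow_add, pow_succ, Nat.zero_div, pow_zero]
    ring
  · -- k < n case
    obtain ⟨m, rfl⟩ : ∃ m, n = k + 1 + m := ⟨n - (k + 1), by omega⟩
    unfold pqTerm
    rw [if_pos (by omega), if_pos (by omega), if_pos (by omega)]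
    have e1 : (k + 1 + m + 1) - (k + 1) = m + 1 := by omega
    have e2 : (k + 1 + m) - (k + 1) = m := by omega
    have e3 : (k + 1 + m) - k = m + 1 := by omega
    rw [e1, e2, e3]
    rw [show k + 1 + m + 1 = (k + 1 + m) + 1 from rfl,
      pqBinom_pascal hq hqp (by omega), e3]
    have h1 : (m + 1) * ((m + 1) - 1) / 2 = m * (m - 1) / 2 + m := by
      simpa using tri_succ m
    have h2 : (k + 1) * ((k + 1) - 1) / 2 = k * (k - 1) / 2 + k := by
      simpa using tri_succ k
    rw [h1, h2]
    simp only [Nat.add_sub_cancel, pow_add, pow_succ]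
    ring

lemma pq_expand {p q : ℝ} (hq : 0 < q) (hqp : q < p) (A B : ℝ) (n : ℕ) :
    ∏ j ∈ Finset.range n, (p ^ j * A + q ^ j * B) =
      ∑ k ∈ Finset.range (n + 1), pqTerm p q A B n k := by
  induction n with
  | zero => simp [pqTerm, pqBinom, pqFact]
  | succ n ih =>
    rw [Finset.prod_range_succ, ih, Finset.sum_range_succ' (pqTerm p q A B (n+1)) (n+1)]
    rw [Finset.sum_congr rfl fun k hk =>
      pqTerm_key hq hqp A B (Nat.lt_succ_iff.mp (Finset.mem_range.mp hk))]
    rw [Finset.sum_add_distrib]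
    have h2 : ∑ k ∈ Finset.range (n + 1), pqTerm p q A B n (k + 1)
        = (∑ k ∈ Finset.range (n + 1), pqTerm p q A B n k) - pqTerm p q A B n 0 := by
      have hs := Finset.sum_range_succ' (pqTerm p q A B n) (n + 1)
      rw [Finset.sum_range_succ (pqTerm p q A B n) (n + 1)] at hs
      have ht : pqTerm p q A B n (n + 1) = 0 := by simp [pqTerm]
      rw [ht, add_zero] at hs
      linarith
    have h0 : pqTerm p q A B (n + 1) 0 = p ^ n * A * pqTerm p q A B n 0 := by
      unfold pqTerm
      rw [if_pos (by omega), if_pos (by omega)]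
      rw [pqBinom_zero hq hqp, pqBinom_zero hq hqp, Nat.sub_zero, Nat.sub_zero]
      rw [show (n + 1) * ((n + 1) - 1) / 2 = n * (n - 1) / 2 + n from by
        simpa using tri_succ n]
      rw [pow_add, pow_succ]
      ring
    rw [← Finset.mul_sum, ← Finset.mul_sum, h2, h0]
    ring

/-- The (p,q)-binomial expansion:
`∏_{j=0}^{n−1} (p^j·a·x + q^j·b·y)
  = ∑_{k=0}^{n} C(n,k)_{p,q}·p^{(n−k)(n−k−1)/2}·q^{k(k−1)/2}·a^{n−k}·b^k·x^{n−k}·y^k`. -/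
theorem pq_binomial_expansion (p q : ℝ) (hq : 0 < q) (hqp : q < p)
    (a b x y : ℝ) (n : ℕ) :
    ∏ j ∈ Finset.range n, (p ^ j * a * x + q ^ j * b * y) =
      ∑ k ∈ Finset.range (n + 1),
        pqBinom p q n k * p ^ ((n - k) * (n - k - 1) / 2) * q ^ (k * (k - 1) / 2) *
          a ^ (n - k) * b ^ k * x ^ (n - k) * y ^ k := by
  calc ∏ j ∈ Finset.range n, (p ^ j * a * x + q ^ j * b * y)
      = ∏ j ∈ Finset.range n, (p ^ j * (a * x) + q ^ j * (b * y)) := by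
        simp only [mul_assoc]
    _ = ∑ k ∈ Finset.range (n + 1), pqTerm p q (a * x) (b * y) n k :=
        pq_expand hq hqp (a * x) (b * y) n
    _ = _ := Finset.sum_congr rfl fun k hk => by
        have hkn : k ≤ n := Nat.lt_succ_iff.mp (Finset.mem_range.mp hk)
        simp only [pqTerm, if_pos hkn, mul_pow]
        ring
end

section
/- (Volkov's theorem.) Let I = [a,b] and J = [c,d] be compact intervals of the real line (a < b, c < d), and let L_{n₁,n₂} : C(I × J) → C(I × J), (n₁,n₂) ∈ ℕ × ℕ, be linear positive operators (i.e., each L_{n₁,n₂} is linear and maps nonnegative functions to nonnegative functions). Suppose that, as n₁, n₂ → ∞, L_{n₁,n₂}(e_{ij}) converges to e_{ij} uniformly on I × J for (i,j) ∈ {(0,0), (1,0), (0,1)}, and L_{n₁,n₂}(e_{20} + e_{02}) converges to e_{20} + e_{02} uniformly on I × J, where e_{ij}(x,y) = x^i·y^j. Then for every f ∈ C(I × J), the double sequence L_{n₁,n₂}(f) converges to f uniformly on I × J, i.e., for every ε > 0 there exists N such that for all n₁, n₂ ≥ N, sup_{(x,y) ∈ I×J} |L_{n₁,n₂}(f)(x,y)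 − f(x,y)| < ε. -/
/-- The two-dimensional monomial test function `e_{ij}(x,y) = x^i·y^j`, viewed as a
continuous function on the rectangle `[a,b] × [c,d]`. -/
noncomputable def testFun (a b c d : ℝ) (i j : ℕ) :
    C((Set.Icc a b ×ˢ Set.Icc c d : Set (ℝ × ℝ)), ℝ) :=
  ⟨fun z => (z : ℝ × ℝ).1 ^ i * (z : ℝ × ℝ).2 ^ j, by fun_prop⟩

set_option maxHeartbeats 1000000

/-- **Volkov's theorem.** Let `I = [a,b]`, `J = [c,d]` be compact intervals and let
`L n₁ n₂ : C(I × J) → C(I × J)` be linear positive operators.  If `L n₁ n₂ (e_{ij}) → e_{ij}`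
uniformly on `I × J` for `(i,j) ∈ {(0,0), (1,0), (0,1)}`, and
`L n₁ n₂ (e₂₀ + e₀₂) → e₂₀ + e₀₂` uniformly on `I × J`, then for every `f ∈ C(I × J)`,
`L n₁ n₂ f → f` uniformly on `I × J` as `n₁, n₂ → ∞`. -/
theorem volkov (a b c d : ℝ) (hab : a < b) (hcd : c < d)
    (L : ℕ → ℕ → C((Set.Icc a b ×ˢ Set.Icc c d : Set (ℝ × ℝ)), ℝ) →ₗ[ℝ]
      C((Set.Icc a b ×ˢ Set.Icc c d : Set (ℝ × ℝ)), ℝ))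
    (hpos : ∀ n₁ n₂ f, (∀ z, 0 ≤ f z) → ∀ z, 0 ≤ (L n₁ n₂ f) z)
    (h00 : ∀ ε > (0 : ℝ), ∃ N, ∀ n₁ n₂, N ≤ n₁ → N ≤ n₂ → ∀ z,
      |(L n₁ n₂ (testFun a b c d 0 0)) z - (testFun a b c d 0 0) z| < ε)
    (h10 : ∀ ε > (0 : ℝ), ∃ N, ∀ n₁ n₂, N ≤ n₁ → N ≤ n₂ → ∀ z,
      |(L n₁ n₂ (testFun a b c d 1 0)) z - (testFun a b c d 1 0) z| < ε)
    (h01 : ∀ ε > (0 : ℝ), ∃ N, ∀ n₁ n₂, N ≤ n₁ → N ≤ n₂ → ∀ z,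
      |(L n₁ n₂ (testFun a b c d 0 1)) z - (testFun a b c d 0 1) z| < ε)
    (h2 : ∀ ε > (0 : ℝ), ∃ N, ∀ n₁ n₂, N ≤ n₁ → N ≤ n₂ → ∀ z,
      |(L n₁ n₂ (testFun a b c d 2 0 + testFun a b c d 0 2)) z -
        (testFun a b c d 2 0 + testFun a b c d 0 2) z| < ε)
    (f : C((Set.Icc a b ×ˢ Set.Icc c d : Set (ℝ × ℝ)), ℝ)) :
    ∀ ε > (0 : ℝ), ∃ N, ∀ n₁ n₂, N ≤ n₁ → N ≤ n₂ → ∀ z,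
      |(L n₁ n₂ f) z - f z| < ε := by
  intro ε hε
  haveI : CompactSpace (Set.Icc a b ×ˢ Set.Icc c d : Set (ℝ × ℝ)) :=
    isCompact_iff_compactSpace.mp (isCompact_Icc.prod isCompact_Icc)
  -- monotonicity of the operators
  have mono : ∀ n₁ n₂ (p q : C((Set.Icc a b ×ˢ Set.Icc c d : Set (ℝ × ℝ)), ℝ)),
      (∀ z, p z ≤ q z) → ∀ z, (L n₁ n₂ p) z ≤ (L n₁ n₂ q) z := by
    intro n₁ n₂ p q hpq z
    have h := hpos n₁ n₂ (q - p)
      (fun z => by simp only [ContinuousMap.sub_apply, sub_nonneg]; exact hpq z) z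
    rw [map_sub] at h
    simp only [ContinuousMap.sub_apply] at h
    linarith
  -- bound on f
  set M : ℝ := ‖f‖ + 1 with hMdef
  have hM0 : 0 < M := by positivity
  have hfM : ∀ z, |f z| ≤ M := by
    intro z
    have := f.norm_coe_le_norm z
    rw [Real.norm_eq_abs] at this
    rw [hMdef]
    linarith
  clear_value M
  -- uniform continuity
  have huc := CompactSpace.uniformContinuous_of_continuous f.continuous
  rw [Metric.uniformContinuous_iff] at huc
  obtain ⟨δ, hδ0, hδ⟩ := huc (ε / 2) (by positivity)
  set α : ℝ := 2 * M / δ ^ 2 with hαdef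
  have hα0 : 0 < α := by positivity
  have hαδ : α * δ ^ 2 = 2 * M := by
    rw [hαdef]; field_simp
  clear_value α
  -- the key pointwise estimate
  have key : ∀ z w : (Set.Icc a b ×ˢ Set.Icc c d : Set (ℝ × ℝ)),
      |f z - f w| ≤ ε / 2 +
        α * (((z : ℝ × ℝ).1 - (w : ℝ × ℝ).1) ^ 2 + ((z : ℝ × ℝ).2 - (w : ℝ × ℝ).2) ^ 2) := by
    intro z w
    set Q : ℝ := ((z : ℝ × ℝ).1 - (w : ℝ × ℝ).1) ^ 2 + ((z : ℝ × ℝ).2 - (w : ℝ × ℝ).2) ^ 2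
      with hQdef
    have hQ0 : 0 ≤ Q := by positivity
    clear_value Q
    rcases lt_or_ge (dist z w) δ with h | h
    · have := hδ h
      rw [Real.dist_eq] at this
      have hαQ : 0 ≤ α * Q := mul_nonneg hα0.le hQ0
      linarith
    · have hd : δ ^ 2 ≤ Q := by
        have h1 : dist z w ≤ Real.sqrt Q := by
          rw [Subtype.dist_eq, Prod.dist_eq]
          have e1 : dist (z : ℝ × ℝ).1 (w : ℝ × ℝ).1 ≤ Real.sqrt Q := by
            rw [Real.dist_eq, ← Real.sqrt_sq_eq_abs]
            exact Real.sqrt_le_sqrt (by nlinarith [sq_nonneg ((z : ℝ × ℝ).2 - (w : ℝ × ℝ).2)])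
          have e2 : dist (z : ℝ × ℝ).2 (w : ℝ × ℝ).2 ≤ Real.sqrt Q := by
            rw [Real.dist_eq, ← Real.sqrt_sq_eq_abs]
            exact Real.sqrt_le_sqrt (by nlinarith [sq_nonneg ((z : ℝ × ℝ).1 - (w : ℝ × ℝ).1)])
          exact max_le e1 e2
        have h2 : δ ≤ Real.sqrt Q := le_trans h h1
        calc δ ^ 2 ≤ Real.sqrt Q ^ 2 := pow_le_pow_left₀ hδ0.le h2 2
          _ = Q := Real.sq_sqrt hQ0
      have h2M : |f z - f w| ≤ 2 * M := by
        have h1 := abs_le.mp (hfM z)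
        have h2 := abs_le.mp (hfM w)
        rw [abs_le]
        constructor <;> linarith [h1.1, h1.2, h2.1, h2.2]
      have : 2 * M ≤ α * Q := by
        calc 2 * M = α * δ ^ 2 := hαδ.symm
          _ ≤ α * Q := mul_le_mul_of_nonneg_left hd hα0.le
      linarith
  -- bound on the rectangle
  set R : ℝ := max (max |a| |b|) (max |c| |d|) + 1 with hRdef
  have hR1 : (1 : ℝ) ≤ R := by
    have : (0:ℝ) ≤ max (max |a| |b|) (max |c| |d|) :=
      le_trans (abs_nonneg a) (le_trans (le_max_left _ _) (le_max_left _ _))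
    linarith
  have hR0 : 0 < R := lt_of_lt_of_le one_pos hR1
  have hcoord : ∀ w : (Set.Icc a b ×ˢ Set.Icc c d : Set (ℝ × ℝ)),
      |(w : ℝ × ℝ).1| ≤ R ∧ |(w : ℝ × ℝ).2| ≤ R := by
    intro w
    obtain ⟨h1, h2⟩ := w.2
    constructor
    · have := abs_le_max_abs_abs h1.1 h1.2
      have h3 : max |a| |b| ≤ R := by
        rw [hRdef]; linarith [le_max_left (max |a| |b|) (max |c| |d|)]
      linarith
    · have := abs_le_max_abs_abs h2.1 h2.2
      have h3 : max |c| |d| ≤ R := by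
        rw [hRdef]; linarith [le_max_right (max |a| |b|) (max |c| |d|)]
      linarith
  clear_value R
  -- the budget
  set B : ℝ := ε / 2 + 2 * α * R ^ 2 + 4 * α * R + α + M + 1 with hBdef
  have hB1 : 1 ≤ B := by
    rw [hBdef]
    have p1 : 0 < α * R ^ 2 := by positivity
    have p2 : 0 < α * R := by positivity
    linarith
  have hB0 : 0 < B := lt_of_lt_of_le one_pos hB1
  set η : ℝ := ε / (2 * B) with hηdef
  have hη0 : 0 < η := by positivity
  have hηB : η * B = ε / 2 := by
    rw [hηdef]; field_simp
  clear_value B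
  clear_value η
  obtain ⟨N00, hN00⟩ := h00 η hη0
  obtain ⟨N10, hN10⟩ := h10 η hη0
  obtain ⟨N01, hN01⟩ := h01 η hη0
  obtain ⟨N2, hN2⟩ := h2 η hη0
  refine ⟨max (max N00 N10) (max N01 N2), ?_⟩
  intro n₁ n₂ hn₁ hn₂ w
  have hn00₁ : N00 ≤ n₁ := le_trans (le_trans (le_max_left _ _) (le_max_left _ _)) hn₁
  have hn00₂ : N00 ≤ n₂ := le_trans (le_trans (le_max_left _ _) (le_max_left _ _)) hn₂
  have hn10₁ : N10 ≤ n₁ := le_trans (le_trans (le_max_right _ _) (le_max_left _ _)) hn₁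
  have hn10₂ : N10 ≤ n₂ := le_trans (le_trans (le_max_right _ _) (le_max_left _ _)) hn₂
  have hn01₁ : N01 ≤ n₁ := le_trans (le_trans (le_max_left _ _) (le_max_right _ _)) hn₁
  have hn01₂ : N01 ≤ n₂ := le_trans (le_trans (le_max_left _ _) (le_max_right _ _)) hn₂
  have hn2₁ : N2 ≤ n₁ := le_trans (le_trans (le_max_right _ _) (le_max_right _ _)) hn₁
  have hn2₂ : N2 ≤ n₂ := le_trans (le_trans (le_max_right _ _) (le_max_right _ _)) hn₂
  set u : ℝ := (w : ℝ × ℝ).1 with hudef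
  set v : ℝ := (w : ℝ × ℝ).2 with hvdef
  obtain ⟨hu, hv⟩ := hcoord w
  -- the deviations
  set D00 : ℝ := (L n₁ n₂ (testFun a b c d 0 0)) w - 1 with hD00def
  set D10 : ℝ := (L n₁ n₂ (testFun a b c d 1 0)) w - u with hD10def
  set D01 : ℝ := (L n₁ n₂ (testFun a b c d 0 1)) w - v with hD01def
  set D2 : ℝ := (L n₁ n₂ (testFun a b c d 2 0 + testFun a b c d 0 2)) w - (u ^ 2 + v ^ 2)
    with hD2def
  have hD00 : |D00| < η := by
    have := hN00 n₁ n₂ hn00₁ hn00₂ w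
    simpa [testFun, hD00def] using this
  have hD10 : |D10| < η := by
    have := hN10 n₁ n₂ hn10₁ hn10₂ w
    simpa [testFun, hD10def, hudef] using this
  have hD01 : |D01| < η := by
    have := hN01 n₁ n₂ hn01₁ hn01₂ w
    simpa [testFun, hD01def, hvdef] using this
  have hD2 : |D2| < η := by
    have := hN2 n₁ n₂ hn2₁ hn2₂ w
    simpa [testFun, hD2def, hudef, hvdef, sq] using this
  clear_value D00 D10 D01 D2
  -- coefficients
  set C1 : ℝ := ε / 2 + α * (u ^ 2 + v ^ 2) with hC1def
  set C2 : ℝ := -(2 * α * u) with hC2def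
  set C3 : ℝ := -(2 * α * v) with hC3def
  -- the majorant
  set g : C((Set.Icc a b ×ˢ Set.Icc c d : Set (ℝ × ℝ)), ℝ) :=
    C1 • testFun a b c d 0 0 + C2 • testFun a b c d 1 0 + C3 • testFun a b c d 0 1 +
      α • (testFun a b c d 2 0 + testFun a b c d 0 2) with hgdef
  have hgapp : ∀ z : (Set.Icc a b ×ˢ Set.Icc c d : Set (ℝ × ℝ)),
      g z = ε / 2 + α * (((z : ℝ × ℝ).1 - u) ^ 2 + ((z : ℝ × ℝ).2 - v) ^ 2) := by
    intro z
    simp only [hgdef, ContinuousMap.add_apply, ContinuousMap.smul_apply, smul_eq_mul, testFun,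
      ContinuousMap.coe_mk, hC1def, hC2def, hC3def]
    ring
  clear_value C1 C2 C3
  have habs : ∀ z, |f z - f w| ≤ g z := by
    intro z
    rw [hgapp z]
    exact key z w
  clear_value g
  -- apply L
  set h1 : C((Set.Icc a b ×ˢ Set.Icc c d : Set (ℝ × ℝ)), ℝ) :=
    f - f w • testFun a b c d 0 0 with hh1def
  have hh1app : ∀ z, h1 z = f z - f w := by
    intro z
    simp [hh1def, testFun]
  clear_value h1
  have hupper : ∀ z, h1 z ≤ g z := by
    intro z; rw [hh1app z]; exact le_trans (le_abs_self _) (habs z)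
  have hlower : ∀ z, (-g) z ≤ h1 z := by
    intro z
    rw [hh1app z]
    simp only [ContinuousMap.neg_apply]
    have := habs z
    have := neg_abs_le (f z - f w)
    linarith
  have hLup := mono n₁ n₂ h1 g hupper w
  have hLlow := mono n₁ n₂ (-g) h1 hlower w
  rw [map_neg] at hLlow
  simp only [ContinuousMap.neg_apply] at hLlow
  have hLh1 : (L n₁ n₂ h1) w = (L n₁ n₂ f) w - f w * (L n₁ n₂ (testFun a b c d 0 0)) w := by
    rw [hh1def, map_sub, map_smul]
    simp
  have hA : |(L n₁ n₂ f) w - f w * (L n₁ n₂ (testFun a b c d 0 0)) w| ≤ (L n₁ n₂ g) w := by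
    rw [← hLh1, abs_le]
    exact ⟨by linarith, hLup⟩
  -- compute L g at w
  have hLg : (L n₁ n₂ g) w = C1 * (1 + D00) + C2 * (u + D10) + C3 * (v + D01) +
      α * (u ^ 2 + v ^ 2 + D2) := by
    rw [hgdef]
    simp only [map_add, map_smul, ContinuousMap.add_apply, ContinuousMap.smul_apply, smul_eq_mul]
    rw [hD00def, hD10def, hD01def, hD2def]
    simp only [map_add, ContinuousMap.add_apply]
    ring
  have hLg' : (L n₁ n₂ g) w = ε / 2 + (C1 * D00 + C2 * D10 + C3 * D01 + α * D2) := by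
    rw [hLg, hC1def, hC2def, hC3def]
    ring
  -- bound the coefficients
  have hC1b : |C1| ≤ ε / 2 + 2 * α * R ^ 2 := by
    have hu2 : u ^ 2 ≤ R ^ 2 := by
      obtain ⟨h1, h2⟩ := abs_le.mp hu
      exact sq_le_sq' h1 h2
    have hv2 : v ^ 2 ≤ R ^ 2 := by
      obtain ⟨h1, h2⟩ := abs_le.mp hv
      exact sq_le_sq' h1 h2
    have h3 : α * (u ^ 2 + v ^ 2) ≤ α * (2 * R ^ 2) :=
      mul_le_mul_of_nonneg_left (by linarith) hα0.le
    rw [hC1def, abs_of_nonneg (by positivity)]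
    linarith
  have hC2b : |C2| ≤ 2 * α * R := by
    rw [hC2def, abs_neg, abs_mul, abs_of_nonneg (by positivity : (0:ℝ) ≤ 2 * α)]
    exact mul_le_mul_of_nonneg_left hu (by positivity)
  have hC3b : |C3| ≤ 2 * α * R := by
    rw [hC3def, abs_neg, abs_mul, abs_of_nonneg (by positivity : (0:ℝ) ≤ 2 * α)]
    exact mul_le_mul_of_nonneg_left hv (by positivity)
  have t1 : |C1 * D00| ≤ (ε / 2 + 2 * α * R ^ 2) * η := by
    rw [abs_mul]
    exact mul_le_mul hC1b hD00.le (abs_nonneg _) (by positivity)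
  have t2 : |C2 * D10| ≤ 2 * α * R * η := by
    rw [abs_mul]
    exact mul_le_mul hC2b hD10.le (abs_nonneg _) (by positivity)
  have t3 : |C3 * D01| ≤ 2 * α * R * η := by
    rw [abs_mul]
    exact mul_le_mul hC3b hD01.le (abs_nonneg _) (by positivity)
  have t4 : |α * D2| ≤ α * η := by
    rw [abs_mul, abs_of_pos hα0]
    exact mul_le_mul_of_nonneg_left hD2.le hα0.le
  have tsum : |C1 * D00 + C2 * D10 + C3 * D01 + α * D2| ≤
      (ε / 2 + 2 * α * R ^ 2) * η + 2 * α * R * η + 2 * α * R * η + α * η := by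
    calc |C1 * D00 + C2 * D10 + C3 * D01 + α * D2|
        ≤ |C1 * D00 + C2 * D10 + C3 * D01| + |α * D2| := abs_add_le _ _
      _ ≤ |C1 * D00 + C2 * D10| + |C3 * D01| + |α * D2| := by linarith [abs_add_le (C1 * D00 + C2 * D10) (C3 * D01)]
      _ ≤ |C1 * D00| + |C2 * D10| + |C3 * D01| + |α * D2| := by linarith [abs_add_le (C1 * D00) (C2 * D10)]
      _ ≤ _ := by linarith
  have hLgb : (L n₁ n₂ g) w ≤ ε / 2 +
      ((ε / 2 + 2 * α * R ^ 2) * η + 2 * α * R * η + 2 * α * R * η + α * η) := by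
    rw [hLg']
    have := le_abs_self (C1 * D00 + C2 * D10 + C3 * D01 + α * D2)
    linarith
  -- final triangle inequality
  have hsplit : (L n₁ n₂ f) w - f w =
      ((L n₁ n₂ f) w - f w * (L n₁ n₂ (testFun a b c d 0 0)) w) + f w * D00 := by
    rw [hD00def]; ring
  have hfinal : |(L n₁ n₂ f) w - f w| ≤ (L n₁ n₂ g) w + M * η := by
    rw [hsplit]
    calc |((L n₁ n₂ f) w - f w * (L n₁ n₂ (testFun a b c d 0 0)) w) + f w * D00|
        ≤ |(L n₁ n₂ f) w - f w * (L n₁ n₂ (testFun a b c d 0 0)) w| + |f w * D00| := abs_add_le _ _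
      _ ≤ (L n₁ n₂ g) w + M * η := by
          have h5 : |f w * D00| ≤ M * η := by
            rw [abs_mul]
            exact mul_le_mul (hfM w) hD00.le (abs_nonneg _) hM0.le
          linarith
  -- numerics: total extra is (B - 1) * η < ε / 2
  have hextra : (ε / 2 + 2 * α * R ^ 2) * η + 2 * α * R * η + 2 * α * R * η + α * η + M * η =
      (B - 1) * η := by
    rw [hBdef]; ring
  have hlt : (B - 1) * η < ε / 2 := by
    have : (B - 1) * η = B * η - η := by ring
    rw [this]
    have : B * η = ε / 2 := by rw [mul_comm]; exact hηB
    linarith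
  calc |(L n₁ n₂ f) w - f w| ≤ (L n₁ n₂ g) w + M * η := hfinal
    _ ≤ ε / 2 + ((ε / 2 + 2 * α * R ^ 2) * η + 2 * α * R * η + 2 * α * R * η + α * η) + M * η := by
        linarith
    _ = ε / 2 + (B - 1) * η := by linarith [hextra]
    _ < ε / 2 + ε / 2 := by linarith
    _ = ε := by ring
end

section
/- Let l ∈ ℕ, 0 ≤ α_i ≤ β_i (i = 1,2), and let (p_n)_{n≥1}, (q_n)_{n≥1} be sequences of reals with 0 < q_n < p_n ≤ 1 for all n, such that p_n → 1, q_n → 1, and p_n^n → a, q_n^n → b for some reals a, b. For n₁, n₂ ≥ 1, let S_{n₁,n₂} denote the bivariate (p,q)-Schurer–Stancu operator with parameters (p_{n₁}, q_{n₁}) in the first variable and (p_{n₂}, q_{n₂}) in the second. Suppose that for every pair (i,j) of natural numbers with i + j ≤ 2, S_{n₁,n₂}(e_{ij}) converges to e_{ij} uniformly on [0,1] × [0,1] as n₁, n₂ → ∞, where e_{ij}(t₁,t₂) = t₁^i·t₂^j. Then for every bounded continuous function f : [0,∞) × [0,∞) → ℝ, S_{n₁,n₂}(f) converges to f uniformly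 on [0,1] × [0,1] as n₁, n₂ → ∞ (for every ε > 0 there is N such that for all n₁, n₂ ≥ N, sup_{(x₁,x₂)∈[0,1]²} |S_{n₁,n₂}(f)(x₁,x₂) − f(x₁,x₂)| < ε). -/
open Finset

lemma pqInt_nonneg {p q : ℝ} (hq : 0 < q) (hqp : q < p) (k : ℕ) : 0 ≤ pqInt p q k := by
  unfold pqInt
  apply div_nonneg _ (by linarith)
  have := pow_le_pow_left₀ hq.le hqp.le k
  linarith

lemma pqBinom_pos {p q : ℝ} (hq : 0 < q) (hqp : q < p) (n k : ℕ) : 0 < pqBinom p q n k :=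
  div_pos (pqFact_pos hq hqp n) (mul_pos (pqFact_pos hq hqp k) (pqFact_pos hq hqp _))

lemma schurerBasis_nonneg {p q x : ℝ} (hq : 0 < q) (hqp : q < p) (n l ν : ℕ)
    (hx0 : 0 ≤ x) (hx1 : x ≤ 1) : 0 ≤ schurerBasis p q n l ν x := by
  unfold schurerBasis
  have hp : 0 < p := hq.trans hqp
  apply mul_nonneg
  apply mul_nonneg
  apply mul_nonneg
  apply mul_nonneg
  · positivity
  · exact (pqBinom_pos hq hqp _ _).le
  · positivity
  · exact pow_nonneg hx0 ν
  · apply Finset.prod_nonneg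
    intro j _
    have h1 : q ^ j ≤ p ^ j := pow_le_pow_left₀ hq.le hqp.le j
    nlinarith [pow_nonneg hq.le j]

lemma stancuNode_nonneg {p q α β : ℝ} (hq : 0 < q) (hqp : q < p) (hα : 0 ≤ α) (hβ : 0 ≤ β)
    {n : ℕ} (hn : 1 ≤ n) (ν : ℕ) : 0 ≤ stancuNode p q α β n ν := by
  unfold stancuNode
  have hp : 0 < p := hq.trans hqp
  apply div_nonneg
  · exact add_nonneg (mul_nonneg (zpow_pos hp _).le (pqInt_nonneg hq hqp ν)) hα
  · exact add_nonneg (pqInt_pos hq hqp hn).le hβ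

lemma abs_lt_of_sq_lt' {z d : ℝ} (h : z ^ 2 < d ^ 2) (hd : 0 < d) : |z| < d := by
  by_contra hc
  push_neg at hc
  nlinarith [sq_abs z, abs_nonneg z]


lemma korovkin_phi_bound {x₁ x₂ s00 s10 s01 s20 s02 η : ℝ}
    (hη : 0 < η) (hx10 : 0 ≤ x₁) (hx11 : x₁ ≤ 1) (hx20 : 0 ≤ x₂) (hx21 : x₂ ≤ 1)
    (h00 : |s00 - 1| < η) (h10 : |s10 - x₁| < η) (h01 : |s01 - x₂| < η)
    (h20 : |s20 - x₁ ^ 2| < η) (h02 : |s02 - x₂ ^ 2| < η) :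
    (s20 - 2 * x₁ * s10 + x₁ ^ 2 * s00) + (s02 - 2 * x₂ * s01 + x₂ ^ 2 * s00) ≤ 8 * η := by
  obtain ⟨a1, a2⟩ := abs_lt.1 h00
  obtain ⟨b1, b2⟩ := abs_lt.1 h10
  obtain ⟨c1, c2⟩ := abs_lt.1 h01
  obtain ⟨d1, d2⟩ := abs_lt.1 h20
  obtain ⟨e1, e2⟩ := abs_lt.1 h02
  have hA1 : x₁ * (x₁ - η) ≤ x₁ * s10 := mul_le_mul_of_nonneg_left (by linarith) hx10
  have hB1 : x₂ * (x₂ - η) ≤ x₂ * s01 := mul_le_mul_of_nonneg_left (by linarith) hx20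
  have hA2 : x₁ ^ 2 * s00 ≤ x₁ ^ 2 * (1 + η) :=
    mul_le_mul_of_nonneg_left (by linarith) (sq_nonneg x₁)
  have hB2 : x₂ ^ 2 * s00 ≤ x₂ ^ 2 * (1 + η) :=
    mul_le_mul_of_nonneg_left (by linarith) (sq_nonneg x₂)
  have hA3 : x₁ * η ≤ η := by nlinarith
  have hB3 : x₂ * η ≤ η := by nlinarith
  have hA4 : x₁ ^ 2 * η ≤ η := by nlinarith
  have hB4 : x₂ ^ 2 * η ≤ η := by nlinarith
  nlinarith [hA1, hB1, hA2, hB2, hA3, hB3, hA4, hB4]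

lemma korovkin_final {ε η K M : ℝ} (hε : 0 < ε) (hη : 0 < η) (hK : 0 ≤ K) (hM : 0 ≤ M)
    (hηD : η * (ε / 4 + 8 * K + M + 1) ≤ ε / 2) :
    ε / 4 * (1 + η) + K * (8 * η) + M * η < ε := by nlinarith

set_option maxHeartbeats 1000000 in
/-- **Korovkin-type uniform convergence for bivariate (p,q)-Schurer–Stancu operators.**
If the sequences `(pₙ)`, `(qₙ)` satisfy `0 < qₙ < pₙ ≤ 1`, `pₙ → 1`, `qₙ → 1`,
`pₙⁿ → a`, `qₙⁿ → b`, and the operators converge uniformly on `[0,1]²` on each test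
function `e_{ij}` with `i + j ≤ 2`, then they converge uniformly on `[0,1]²` for every
bounded continuous `f : [0,∞)² → ℝ`. -/
theorem schurerStancu_uniform_convergence (l : ℕ) (α₁ β₁ α₂ β₂ : ℝ)
    (hα₁ : 0 ≤ α₁) (hαβ₁ : α₁ ≤ β₁) (hα₂ : 0 ≤ α₂) (hαβ₂ : α₂ ≤ β₂)
    (p q : ℕ → ℝ) (hpq : ∀ n, 1 ≤ n → 0 < q n ∧ q n < p n ∧ p n ≤ 1)
    (a b : ℝ)
    (hp1 : Filter.Tendsto p Filter.atTop (nhds 1))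
    (hq1 : Filter.Tendsto q Filter.atTop (nhds 1))
    (hpa : Filter.Tendsto (fun n => p n ^ n) Filter.atTop (nhds a))
    (hqb : Filter.Tendsto (fun n => q n ^ n) Filter.atTop (nhds b))
    (htest : ∀ i j : ℕ, i + j ≤ 2 → ∀ ε > (0 : ℝ), ∃ N, ∀ n₁ n₂, N ≤ n₁ → N ≤ n₂ →
      ∀ x₁ ∈ Set.Icc (0 : ℝ) 1, ∀ x₂ ∈ Set.Icc (0 : ℝ) 1,
        |schurerStancu n₁ n₂ l (p n₁) (q n₁) α₁ β₁ (p n₂) (q n₂) α₂ β₂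
            (fun t₁ t₂ => t₁ ^ i * t₂ ^ j) x₁ x₂ - x₁ ^ i * x₂ ^ j| < ε)
    (f : ℝ → ℝ → ℝ)
    (hfb : ∃ M, ∀ t s, 0 ≤ t → 0 ≤ s → |f t s| ≤ M)
    (hfc : ContinuousOn (fun z : ℝ × ℝ => f z.1 z.2) (Set.Ici 0 ×ˢ Set.Ici 0)) :
    ∀ ε > (0 : ℝ), ∃ N, ∀ n₁ n₂, N ≤ n₁ → N ≤ n₂ →
      ∀ x₁ ∈ Set.Icc (0 : ℝ) 1, ∀ x₂ ∈ Set.Icc (0 : ℝ) 1,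
        |schurerStancu n₁ n₂ l (p n₁) (q n₁) α₁ β₁ (p n₂) (q n₂) α₂ β₂ f x₁ x₂
          - f x₁ x₂| < ε := by
  intro ε hε
  obtain ⟨M, hM⟩ := hfb
  have hM0 : 0 ≤ M := le_trans (abs_nonneg _) (hM 0 0 le_rfl le_rfl)
  -- uniform continuity of f on [0,2]²
  have hcomp : IsCompact (Set.Icc (0:ℝ) 2 ×ˢ Set.Icc (0:ℝ) 2) :=
    isCompact_Icc.prod isCompact_Icc
  have hsub : (Set.Icc (0:ℝ) 2 ×ˢ Set.Icc (0:ℝ) 2) ⊆ (Set.Ici (0:ℝ) ×ˢ Set.Ici (0:ℝ)) :=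
    Set.prod_mono Set.Icc_subset_Ici_self Set.Icc_subset_Ici_self
  have huc : UniformContinuousOn (fun z : ℝ × ℝ => f z.1 z.2)
      (Set.Icc (0:ℝ) 2 ×ˢ Set.Icc (0:ℝ) 2) :=
    hcomp.uniformContinuousOn_of_continuous (hfc.mono hsub)
  have hε4 : 0 < ε / 4 := by linarith
  obtain ⟨δ, hδ, hδf⟩ := Metric.uniformContinuousOn_iff.1 huc (ε / 4) hε4
  set δ' : ℝ := min δ 1 with hδ'def
  have hδ'0 : 0 < δ' := lt_min hδ one_pos
  have hδ'1 : δ' ≤ 1 := min_le_right _ _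
  have hδ'δ : δ' ≤ δ := min_le_left _ _
  set K : ℝ := 2 * M / δ' ^ 2 with hKdef
  have hK0 : 0 ≤ K := by positivity
  -- pointwise estimate
  have hpb : ∀ u v xx yy : ℝ, 0 ≤ u → 0 ≤ v → 0 ≤ xx → xx ≤ 1 → 0 ≤ yy → yy ≤ 1 →
      |f u v - f xx yy| ≤ ε / 4 + K * ((u - xx) ^ 2 + (v - yy) ^ 2) := by
    intro u v xx yy hu hv hx0 hx1 hy0 hy1
    by_cases hcase : (u - xx) ^ 2 + (v - yy) ^ 2 < δ' ^ 2
    · have h1 : |u - xx| < δ' := abs_lt_of_sq_lt' (by nlinarith [sq_nonneg (v - yy)]) hδ'0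
      have h2 : |v - yy| < δ' := abs_lt_of_sq_lt' (by nlinarith [sq_nonneg (u - xx)]) hδ'0
      have h1' := abs_lt.1 h1
      have h2' := abs_lt.1 h2
      have h1'' := h1'.2
      have h2'' := h2'.2
      have hmem1 : (⟨u, v⟩ : ℝ × ℝ) ∈ Set.Icc (0:ℝ) 2 ×ˢ Set.Icc (0:ℝ) 2 :=
        ⟨⟨hu, by linarith⟩, ⟨hv, by linarith⟩⟩
      have hmem2 : (⟨xx, yy⟩ : ℝ × ℝ) ∈ Set.Icc (0:ℝ) 2 ×ˢ Set.Icc (0:ℝ) 2 :=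
        ⟨⟨hx0, by linarith⟩, ⟨hy0, by linarith⟩⟩
      have hdist : dist ((⟨u, v⟩ : ℝ × ℝ)) (⟨xx, yy⟩ : ℝ × ℝ) < δ := by
        rw [Prod.dist_eq]
        apply lt_of_lt_of_le _ hδ'δ
        apply max_lt
        · rw [Real.dist_eq]; exact h1
        · rw [Real.dist_eq]; exact h2
      have := hδf ⟨u, v⟩ hmem1 ⟨xx, yy⟩ hmem2 hdist
      rw [Real.dist_eq] at this
      have hφ : 0 ≤ K * ((u - xx) ^ 2 + (v - yy) ^ 2) := by positivity
      simp only at this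
      linarith
    · push_neg at hcase
      have hb : |f u v - f xx yy| ≤ 2 * M := by
        have h1 := hM u v hu hv
        have h2 := hM xx yy hx0 hy0
        calc |f u v - f xx yy| ≤ |f u v| + |f xx yy| := abs_sub _ _
          _ ≤ 2 * M := by linarith
      have hKδ : K * δ' ^ 2 = 2 * M := by
        rw [hKdef]; field_simp
      have : 2 * M ≤ K * ((u - xx) ^ 2 + (v - yy) ^ 2) := by
        rw [← hKδ]
        exact mul_le_mul_of_nonneg_left hcase hK0
      linarith
  -- choice of η
  set D : ℝ := ε / 4 + 8 * K + M + 1 with hDdef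
  have hD : 0 < D := by positivity
  set η : ℝ := min 1 (ε / (2 * D)) with hηdef
  have hη0 : 0 < η := lt_min one_pos (by positivity)
  have hη1 : η ≤ 1 := min_le_left _ _
  have hηD : η * D ≤ ε / 2 := by
    have h1 : η ≤ ε / (2 * D) := min_le_right _ _
    have := mul_le_mul_of_nonneg_right h1 hD.le
    calc η * D ≤ ε / (2 * D) * D := this
      _ = ε / 2 := by field_simp
  -- test function convergence instances
  obtain ⟨N00, hN00⟩ := htest 0 0 (by norm_num) η hη0
  obtain ⟨N10, hN10⟩ := htest 1 0 (by norm_num) η hη0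
  obtain ⟨N01, hN01⟩ := htest 0 1 (by norm_num) η hη0
  obtain ⟨N20, hN20⟩ := htest 2 0 (by norm_num) η hη0
  obtain ⟨N02, hN02⟩ := htest 0 2 (by norm_num) η hη0
  refine ⟨max 1 (N00 + N10 + N01 + N20 + N02), ?_⟩
  intro n₁ n₂ h₁ h₂ x₁ hx₁ x₂ hx₂
  have hn₁ : 1 ≤ n₁ := le_trans (le_max_left _ _) h₁
  have hn₂ : 1 ≤ n₂ := le_trans (le_max_left _ _) h₂
  have hmax₁ := le_trans (le_max_right _ _) h₁
  have hmax₂ := le_trans (le_max_right _ _) h₂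
  obtain ⟨hq₁, hqp₁, hp₁⟩ := hpq n₁ hn₁
  obtain ⟨hq₂, hqp₂, hp₂⟩ := hpq n₂ hn₂
  have hB00' := hN00 n₁ n₂ (by omega) (by omega) x₁ hx₁ x₂ hx₂
  have hB10' := hN10 n₁ n₂ (by omega) (by omega) x₁ hx₁ x₂ hx₂
  have hB01' := hN01 n₁ n₂ (by omega) (by omega) x₁ hx₁ x₂ hx₂
  have hB20' := hN20 n₁ n₂ (by omega) (by omega) x₁ hx₁ x₂ hx₂
  have hB02' := hN02 n₁ n₂ (by omega) (by omega) x₁ hx₁ x₂ hx₂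
  set P := Finset.range (n₁ + l + 1) ×ˢ Finset.range (n₂ + l + 1) with hPdef
  set W : ℕ → ℕ → ℝ := fun ν₁ ν₂ =>
    schurerBasis (p n₁) (q n₁) n₁ l ν₁ x₁ * schurerBasis (p n₂) (q n₂) n₂ l ν₂ x₂ with hWdef
  set T₁ : ℕ → ℝ := fun ν => stancuNode (p n₁) (q n₁) α₁ β₁ n₁ ν with hT1def
  set T₂ : ℕ → ℝ := fun ν => stancuNode (p n₂) (q n₂) α₂ β₂ n₂ ν with hT2def
  have hW : ∀ ν₁ ν₂ : ℕ, 0 ≤ W ν₁ ν₂ := fun ν₁ ν₂ =>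
    mul_nonneg (schurerBasis_nonneg hq₁ hqp₁ _ _ _ hx₁.1 hx₁.2)
      (schurerBasis_nonneg hq₂ hqp₂ _ _ _ hx₂.1 hx₂.2)
  have hT1 : ∀ ν, 0 ≤ T₁ ν := fun ν => stancuNode_nonneg hq₁ hqp₁ hα₁ (hα₁.trans hαβ₁) hn₁ ν
  have hT2 : ∀ ν, 0 ≤ T₂ ν := fun ν => stancuNode_nonneg hq₂ hqp₂ hα₂ (hα₂.trans hαβ₂) hn₂ ν
  have hop : ∀ g : ℝ → ℝ → ℝ,
      schurerStancu n₁ n₂ l (p n₁) (q n₁) α₁ β₁ (p n₂) (q n₂) α₂ β₂ g x₁ x₂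
        = ∑ z ∈ P, W z.1 z.2 * g (T₁ z.1) (T₂ z.2) := by
    intro g
    rw [hPdef, Finset.sum_product]
    simp only [hWdef, hT1def, hT2def, schurerStancu]
  set s00 := ∑ z ∈ P, W z.1 z.2 with hs00
  set s10 := ∑ z ∈ P, W z.1 z.2 * T₁ z.1 with hs10
  set s01 := ∑ z ∈ P, W z.1 z.2 * T₂ z.2 with hs01
  set s20 := ∑ z ∈ P, W z.1 z.2 * (T₁ z.1) ^ 2 with hs20
  set s02 := ∑ z ∈ P, W z.1 z.2 * (T₂ z.2) ^ 2 with hs02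
  have hB00 : |s00 - 1| < η := by
    have h := hB00'
    rw [hop (fun t₁ t₂ => t₁ ^ 0 * t₂ ^ 0)] at h
    simpa [← hs00] using h
  have hB10 : |s10 - x₁| < η := by
    have h := hB10'
    rw [hop (fun t₁ t₂ => t₁ ^ 1 * t₂ ^ 0)] at h
    simpa [← hs10] using h
  have hB01 : |s01 - x₂| < η := by
    have h := hB01'
    rw [hop (fun t₁ t₂ => t₁ ^ 0 * t₂ ^ 1)] at h
    simpa [← hs01] using h
  have hB20 : |s20 - x₁ ^ 2| < η := by
    have h := hB20'
    rw [hop (fun t₁ t₂ => t₁ ^ 2 * t₂ ^ 0)] at h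
    simpa [← hs20] using h
  have hB02 : |s02 - x₂ ^ 2| < η := by
    have h := hB02'
    rw [hop (fun t₁ t₂ => t₁ ^ 0 * t₂ ^ 2)] at h
    simpa [← hs02] using h
  rw [hop f]
  set F := f x₁ x₂ with hFdef
  have h1 : ∑ z ∈ P, W z.1 z.2 * (f (T₁ z.1) (T₂ z.2) - F)
      = (∑ z ∈ P, W z.1 z.2 * f (T₁ z.1) (T₂ z.2)) - ∑ z ∈ P, F * W z.1 z.2 := by
    rw [← Finset.sum_sub_distrib]
    exact Finset.sum_congr rfl fun z _ => by ring
  have hdecomp : (∑ z ∈ P, W z.1 z.2 * f (T₁ z.1) (T₂ z.2)) - F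
      = (∑ z ∈ P, W z.1 z.2 * (f (T₁ z.1) (T₂ z.2) - F)) + F * (s00 - 1) := by
    rw [h1, mul_sub, hs00, Finset.mul_sum]
    ring
  have habs : |(∑ z ∈ P, W z.1 z.2 * f (T₁ z.1) (T₂ z.2)) - F|
      ≤ (∑ z ∈ P, W z.1 z.2 * (ε / 4 + K * ((T₁ z.1 - x₁) ^ 2 + (T₂ z.2 - x₂) ^ 2)))
        + M * |s00 - 1| := by
    rw [hdecomp]
    refine le_trans (abs_add_le _ _) (add_le_add ?_ ?_)
    · refine le_trans (Finset.abs_sum_le_sum_abs _ _) (Finset.sum_le_sum fun z _ => ?_)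
      rw [abs_mul, abs_of_nonneg (hW _ _)]
      exact mul_le_mul_of_nonneg_left
        (hpb _ _ _ _ (hT1 _) (hT2 _) hx₁.1 hx₁.2 hx₂.1 hx₂.2) (hW _ _)
    · rw [abs_mul]
      exact mul_le_mul_of_nonneg_right (hM x₁ x₂ hx₁.1 hx₂.1) (abs_nonneg _)
  have hsplit : (∑ z ∈ P, W z.1 z.2 * (ε / 4 + K * ((T₁ z.1 - x₁) ^ 2 + (T₂ z.2 - x₂) ^ 2)))
      = ε / 4 * s00 + K * ∑ z ∈ P, W z.1 z.2 * ((T₁ z.1 - x₁) ^ 2 + (T₂ z.2 - x₂) ^ 2) := by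
    rw [hs00, Finset.mul_sum, Finset.mul_sum, ← Finset.sum_add_distrib]
    exact Finset.sum_congr rfl fun z _ => by ring
  have hSphi : ∑ z ∈ P, W z.1 z.2 * ((T₁ z.1 - x₁) ^ 2 + (T₂ z.2 - x₂) ^ 2)
      = (s20 - 2 * x₁ * s10 + x₁ ^ 2 * s00) + (s02 - 2 * x₂ * s01 + x₂ ^ 2 * s00) := by
    rw [hs00, hs10, hs01, hs20, hs02]
    simp only [Finset.mul_sum, ← Finset.sum_sub_distrib, ← Finset.sum_add_distrib]
    exact Finset.sum_congr rfl fun z _ => by ring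
  obtain ⟨hx10, hx11⟩ := hx₁
  obtain ⟨hx20, hx21⟩ := hx₂
  have hs00le : s00 ≤ 1 + η := by
    have := (abs_lt.1 hB00).2
    linarith
  have hphibound := korovkin_phi_bound hη0 hx10 hx11 hx20 hx21 hB00 hB10 hB01 hB20 hB02
  have hs00le : s00 ≤ 1 + η := by
    have := (abs_lt.1 hB00).2
    linarith
  have hterm1 : ε / 4 * s00 ≤ ε / 4 * (1 + η) :=
    mul_le_mul_of_nonneg_left hs00le hε4.le
  have hterm2 : K * ((s20 - 2 * x₁ * s10 + x₁ ^ 2 * s00) + (s02 - 2 * x₂ * s01 + x₂ ^ 2 * s00))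
      ≤ K * (8 * η) := mul_le_mul_of_nonneg_left hphibound hK0
  have hterm3 : M * |s00 - 1| ≤ M * η := mul_le_mul_of_nonneg_left hB00.le hM0
  rw [hDdef] at hηD
  calc |(∑ z ∈ P, W z.1 z.2 * f (T₁ z.1) (T₂ z.2)) - F|
      ≤ (∑ z ∈ P, W z.1 z.2 * (ε / 4 + K * ((T₁ z.1 - x₁) ^ 2 + (T₂ z.2 - x₂) ^ 2)))
        + M * |s00 - 1| := habs
    _ = ε / 4 * s00
        + K * ((s20 - 2 * x₁ * s10 + x₁ ^ 2 * s00) + (s02 - 2 * x₂ * s01 + x₂ ^ 2 * s00))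
        + M * |s00 - 1| := by rw [hsplit, hSphi]
    _ ≤ ε / 4 * (1 + η) + K * (8 * η) + M * η :=
        add_le_add (add_le_add hterm1 hterm2) hterm3
    _ < ε := korovkin_final hε hη0 hK0 hM0 hηD
end

section
/- (Stancu's inequality.) Let L be a linear operator from real-valued functions on [0,∞) × [0,∞) to real-valued functions on [0,∞) × [0,∞) that is positive (g ≥ 0 on [0,∞)² implies Lg ≥ 0 on [0,∞)²). Let f : [0,∞) × [0,∞) → ℝ be bounded and continuous, let (x,y) ∈ [0,∞) × [0,∞), and let δ₁, δ₂ > 0. Then |(Lf)(x,y) − f(x,y)| ≤ |(Le_{00})(x,y) − 1|·|f(x,y)| + [ (Le_{00})(x,y) + δ₁^{−1}·√((Le_{00})(x,y) · (L φ_x)(x,y)) + δ₂^{−1}·√((Le_{00})(x,y) · (L ψ_y)(x,y)) + δ₁^{−1}·δ₂^{−1}·√(((Le_{00})(x,y))² · (L φ_x)(x,y) · (L ψ_y)(x,y)) ] · ω_total(f; δ₁, δ₂), where e_{00}(t,s) = 1, φ_x(t,s) = (t − x)², and ψ_y(t,s) = (s − y)². -/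
set_option maxHeartbeats 1000000


/-- The total modulus of continuity on `[0,∞) × [0,∞)`:
`ω_total(f; δ₁, δ₂) = sup{ |f(x,y) − f(x′,y′)| : |x − x′| ≤ δ₁, |y − y′| ≤ δ₂ }`. -/
noncomputable def totalModulus (f : ℝ → ℝ → ℝ) (δ₁ δ₂ : ℝ) : ℝ :=
  sSup { r : ℝ | ∃ x y x' y', 0 ≤ x ∧ 0 ≤ y ∧ 0 ≤ x' ∧ 0 ≤ y' ∧
    |x - x'| ≤ δ₁ ∧ |y - y'| ≤ δ₂ ∧ r = |f x y - f x' y'| }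

/-- Telescoping: if consecutive increments are bounded by `w`, so is the total. -/
theorem chain_abs (g : ℕ → ℝ) (w : ℝ) :
    ∀ N : ℕ, (∀ k, k < N → |g (k + 1) - g k| ≤ w) → |g N - g 0| ≤ N * w := by
  intro N
  induction N with
  | zero => simp
  | succ n ih =>
    intro h
    have h1 := ih (fun k hk => h k (Nat.lt_succ_of_lt hk))
    have h2 := h n (Nat.lt_succ_self n)
    calc |g (n + 1) - g 0| ≤ |g (n + 1) - g n| + |g n - g 0| := abs_sub_le _ _ _
      _ ≤ w + n * w := add_le_add h2 h1
      _ = ((n + 1 : ℕ) : ℝ) * w := by push_cast; ring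

/-- **Stancu's inequality.** For a positive linear operator `L` on real functions on
`[0,∞)²`, a bounded continuous `f`, a point `(x,y) ∈ [0,∞)²` and `δ₁, δ₂ > 0`:
`|(Lf)(x,y) − f(x,y)| ≤ |(Le₀₀)(x,y) − 1|·|f(x,y)| + [(Le₀₀)(x,y)
  + δ₁⁻¹·√((Le₀₀)(x,y)·(Lφₓ)(x,y)) + δ₂⁻¹·√((Le₀₀)(x,y)·(Lψ_y)(x,y))
  + δ₁⁻¹·δ₂⁻¹·√(((Le₀₀)(x,y))²·(Lφₓ)(x,y)·(Lψ_y)(x,y))]·ω_total(f; δ₁, δ₂)`. -/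
theorem stancu_inequality
    (L : (ℝ → ℝ → ℝ) → ℝ → ℝ → ℝ)
    (hadd : ∀ f g : ℝ → ℝ → ℝ, ∀ x y : ℝ,
      L (fun t s => f t s + g t s) x y = L f x y + L g x y)
    (hsmul : ∀ (c : ℝ) (f : ℝ → ℝ → ℝ), ∀ x y : ℝ,
      L (fun t s => c * f t s) x y = c * L f x y)
    (hpos : ∀ g : ℝ → ℝ → ℝ, (∀ t s, 0 ≤ t → 0 ≤ s → 0 ≤ g t s) →
      ∀ x y, 0 ≤ x → 0 ≤ y → 0 ≤ L g x y)
    (f : ℝ → ℝ → ℝ)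
    (hfb : ∃ M, ∀ t s, 0 ≤ t → 0 ≤ s → |f t s| ≤ M)
    (hfc : ContinuousOn (fun z : ℝ × ℝ => f z.1 z.2) (Set.Ici 0 ×ˢ Set.Ici 0))
    (x y : ℝ) (hx : 0 ≤ x) (hy : 0 ≤ y)
    (δ₁ δ₂ : ℝ) (hδ₁ : 0 < δ₁) (hδ₂ : 0 < δ₂) :
    |L f x y - f x y| ≤
      |L (fun _ _ => 1) x y - 1| * |f x y| +
      (L (fun _ _ => 1) x y
        + δ₁⁻¹ * Real.sqrt (L (fun _ _ => 1) x y * L (fun t _ => (t - x) ^ 2) x y)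
        + δ₂⁻¹ * Real.sqrt (L (fun _ _ => 1) x y * L (fun _ s => (s - y) ^ 2) x y)
        + δ₁⁻¹ * δ₂⁻¹ * Real.sqrt ((L (fun _ _ => 1) x y) ^ 2
            * L (fun t _ => (t - x) ^ 2) x y * L (fun _ s => (s - y) ^ 2) x y))
        * totalModulus f δ₁ δ₂ := by
  obtain ⟨M, hM⟩ := hfb
  -- boundedness of the modulus set
  have hbdd : BddAbove { r : ℝ | ∃ a b a' b', 0 ≤ a ∧ 0 ≤ b ∧ 0 ≤ a' ∧ 0 ≤ b' ∧
      |a - a'| ≤ δ₁ ∧ |b - b'| ≤ δ₂ ∧ r = |f a b - f a' b'| } := by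
    refine ⟨2 * M, ?_⟩
    rintro r ⟨a, b, a', b', ha, hb, ha', hb', _, _, rfl⟩
    calc |f a b - f a' b'| ≤ |f a b| + |f a' b'| := abs_sub _ _
      _ ≤ M + M := add_le_add (hM a b ha hb) (hM a' b' ha' hb')
      _ = 2 * M := by ring
  have key : ∀ a b a' b' : ℝ, 0 ≤ a → 0 ≤ b → 0 ≤ a' → 0 ≤ b' →
      |a - a'| ≤ δ₁ → |b - b'| ≤ δ₂ → |f a b - f a' b'| ≤ totalModulus f δ₁ δ₂ := by
    intro a b a' b' ha hb ha' hb' h1 h2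
    exact le_csSup hbdd ⟨a, b, a', b', ha, hb, ha', hb', h1, h2, rfl⟩
  have hω0 : 0 ≤ totalModulus f δ₁ δ₂ := by
    have h := key 0 0 0 0 le_rfl le_rfl le_rfl le_rfl (by simp [hδ₁.le]) (by simp [hδ₂.le])
    simpa using h
  -- pointwise estimate via a diagonal path
  have hpt : ∀ t s : ℝ, 0 ≤ t → 0 ≤ s →
      |f t s - f x y| ≤ (1 + δ₁⁻¹ * |t - x| + δ₂⁻¹ * |s - y|) * totalModulus f δ₁ δ₂ := by
    intro t s ht hs
    have hlam0 : 0 ≤ |t - x| / δ₁ := by positivity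
    have hmu0 : 0 ≤ |s - y| / δ₂ := by positivity
    set N : ℕ := max ⌈|t - x| / δ₁⌉₊ ⌈|s - y| / δ₂⌉₊ with hNdef
    rcases Nat.eq_zero_or_pos N with hN | hN
    · rw [hNdef] at hN
      obtain ⟨h1, h2⟩ := Nat.max_eq_zero_iff.mp hN
      have h1' : |t - x| / δ₁ ≤ 0 := Nat.ceil_eq_zero.mp h1
      have h2' : |s - y| / δ₂ ≤ 0 := Nat.ceil_eq_zero.mp h2
      have htx : t = x := by
        have : |t - x| = 0 := by
          by_contra hne
          have hp : 0 < |t - x| := lt_of_le_of_ne (abs_nonneg _) (Ne.symm hne)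
          have : 0 < |t - x| / δ₁ := div_pos hp hδ₁
          linarith
        have := abs_eq_zero.mp this; linarith
      have hsy : s = y := by
        have : |s - y| = 0 := by
          by_contra hne
          have hp : 0 < |s - y| := lt_of_le_of_ne (abs_nonneg _) (Ne.symm hne)
          have : 0 < |s - y| / δ₂ := div_pos hp hδ₂
          linarith
        have := abs_eq_zero.mp this; linarith
      subst htx; subst hsy
      simpa using hω0
    · have hNpos : (0 : ℝ) < (N : ℝ) := by exact_mod_cast hN
      have hN0 : ((N : ℝ)) ≠ 0 := ne_of_gt hNpos
      have hNlam : |t - x| ≤ (N : ℝ) * δ₁ := by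
        have hceil : |t - x| / δ₁ ≤ (N : ℝ) := by
          refine le_trans (Nat.le_ceil _) ?_
          rw [hNdef]; exact_mod_cast le_max_left ⌈|t - x| / δ₁⌉₊ ⌈|s - y| / δ₂⌉₊
        rw [div_le_iff₀ hδ₁] at hceil; linarith
      have hNmu : |s - y| ≤ (N : ℝ) * δ₂ := by
        have hceil : |s - y| / δ₂ ≤ (N : ℝ) := by
          refine le_trans (Nat.le_ceil _) ?_
          rw [hNdef]; exact_mod_cast le_max_right ⌈|t - x| / δ₁⌉₊ ⌈|s - y| / δ₂⌉₊
        rw [div_le_iff₀ hδ₂] at hceil; linarith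
      have hpair : ∀ k : ℕ, k + 1 ≤ N →
          |f ((1 - ((k : ℝ) + 1) / N) * x + (((k : ℝ) + 1) / N) * t)
             ((1 - ((k : ℝ) + 1) / N) * y + (((k : ℝ) + 1) / N) * s)
           - f ((1 - (k : ℝ) / N) * x + ((k : ℝ) / N) * t)
             ((1 - (k : ℝ) / N) * y + ((k : ℝ) / N) * s)| ≤ totalModulus f δ₁ δ₂ := by
        intro k hk
        have hk1 : ((k : ℝ) + 1) ≤ (N : ℝ) := by exact_mod_cast hk
        have hkk : (0 : ℝ) ≤ (k : ℝ) := Nat.cast_nonneg k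
        have h1 : ((k : ℝ) + 1) / (N : ℝ) ≤ 1 := by rw [div_le_one hNpos]; exact hk1
        have h2 : (0 : ℝ) ≤ ((k : ℝ) + 1) / (N : ℝ) := by positivity
        have h3 : (k : ℝ) / (N : ℝ) ≤ 1 := by rw [div_le_one hNpos]; linarith
        have h4 : (0 : ℝ) ≤ (k : ℝ) / (N : ℝ) := by positivity
        apply key
        · exact add_nonneg (mul_nonneg (by linarith) hx) (mul_nonneg h2 ht)
        · exact add_nonneg (mul_nonneg (by linarith) hy) (mul_nonneg h2 hs)
        · exact add_nonneg (mul_nonneg (by linarith) hx) (mul_nonneg h4 ht)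
        · exact add_nonneg (mul_nonneg (by linarith) hy) (mul_nonneg h4 hs)
        · have heq : (1 - ((k : ℝ) + 1) / N) * x + (((k : ℝ) + 1) / N) * t
              - ((1 - (k : ℝ) / N) * x + ((k : ℝ) / N) * t) = (t - x) / N := by
            field_simp; ring
          rw [heq, abs_div, abs_of_pos hNpos, div_le_iff₀ hNpos]
          linarith
        · have heq : (1 - ((k : ℝ) + 1) / N) * y + (((k : ℝ) + 1) / N) * s
              - ((1 - (k : ℝ) / N) * y + ((k : ℝ) / N) * s) = (s - y) / N := by
            field_simp; ring
          rw [heq, abs_div, abs_of_pos hNpos, div_le_iff₀ hNpos]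
          linarith
      have hchain : |f t s - f x y| ≤ (N : ℝ) * totalModulus f δ₁ δ₂ := by
        have h := chain_abs
          (fun k : ℕ => f ((1 - (k : ℝ) / N) * x + ((k : ℝ) / N) * t)
            ((1 - (k : ℝ) / N) * y + ((k : ℝ) / N) * s))
          (totalModulus f δ₁ δ₂) N
          (by
            intro k hk
            simp only [Nat.cast_add, Nat.cast_one]
            exact hpair k hk)
        simpa [div_self hN0] using h
      have hNle : (N : ℝ) ≤ 1 + |t - x| / δ₁ + |s - y| / δ₂ := by
        rw [hNdef]
        push_cast [Nat.cast_max]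
        apply max_le
        · have := Nat.ceil_lt_add_one hlam0
          linarith
        · have := Nat.ceil_lt_add_one hmu0
          linarith
      calc |f t s - f x y| ≤ (N : ℝ) * totalModulus f δ₁ δ₂ := hchain
        _ ≤ (1 + |t - x| / δ₁ + |s - y| / δ₂) * totalModulus f δ₁ δ₂ :=
            mul_le_mul_of_nonneg_right hNle hω0
        _ = (1 + δ₁⁻¹ * |t - x| + δ₂⁻¹ * |s - y|) * totalModulus f δ₁ δ₂ := by ring
  -- linearity helpers
  have hLsub : ∀ g h : ℝ → ℝ → ℝ,
      L (fun t s => g t s - h t s) x y = L g x y - L h x y := by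
    intro g h
    have h1 : (fun t s => g t s - h t s) = (fun t s => g t s + (-1) * h t s) := by
      funext t s; ring
    rw [h1, hadd, hsmul]; ring
  have hmono : ∀ g h : ℝ → ℝ → ℝ, (∀ t s, 0 ≤ t → 0 ≤ s → g t s ≤ h t s) →
      L g x y ≤ L h x y := by
    intro g h hle
    have h0 := hpos (fun t s => h t s - g t s)
      (fun t s ht hs => sub_nonneg.2 (hle t s ht hs)) x y hx hy
    rw [hLsub] at h0; linarith
  set ω := totalModulus f δ₁ δ₂ with hωdef
  set A := L (fun _ _ => 1) x y with hAdef
  set B := L (fun t _ => (t - x) ^ 2) x y with hBdef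
  set C := L (fun _ s => (s - y) ^ 2) x y with hCdef
  set F₁ := L (fun t _ => |t - x|) x y with hF1def
  set F₂ := L (fun _ s => |s - y|) x y with hF2def
  have hA : 0 ≤ A := hpos _ (fun _ _ _ _ => zero_le_one) x y hx hy
  have hB : 0 ≤ B := hpos _ (fun t s _ _ => sq_nonneg (t - x)) x y hx hy
  have hC : 0 ≤ C := hpos _ (fun t s _ _ => sq_nonneg (s - y)) x y hx hy
  have hF1 : 0 ≤ F₁ := hpos _ (fun t s _ _ => abs_nonneg (t - x)) x y hx hy
  have hF2 : 0 ≤ F₂ := hpos _ (fun t s _ _ => abs_nonneg (s - y)) x y hx hy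
  -- expansion of the majorant
  have hexp : L (fun t s => ω * 1 + ((ω * δ₁⁻¹) * |t - x| + (ω * δ₂⁻¹) * |s - y|)) x y
      = ω * A + ((ω * δ₁⁻¹) * F₁ + (ω * δ₂⁻¹) * F₂) := by
    rw [hadd, hadd, hsmul, hsmul, hsmul]
  -- upper and lower bounds
  have hLconst : ∀ c : ℝ, L (fun _ _ => c * 1) x y = c * A := fun c => hsmul c _ x y
  have hub : L f x y - f x y * A ≤ ω * A + ((ω * δ₁⁻¹) * F₁ + (ω * δ₂⁻¹) * F₂) := by
    have h1 : L (fun t s => f t s - f x y * 1) x y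
        ≤ L (fun t s => ω * 1 + ((ω * δ₁⁻¹) * |t - x| + (ω * δ₂⁻¹) * |s - y|)) x y := by
      apply hmono
      intro t s ht hs
      have h2 := hpt t s ht hs
      have h3 := le_abs_self (f t s - f x y)
      rw [hωdef]; nlinarith [h2, h3]
    rw [hLsub, hexp] at h1
    rw [hLconst] at h1
    exact h1
  have hlb : f x y * A - L f x y ≤ ω * A + ((ω * δ₁⁻¹) * F₁ + (ω * δ₂⁻¹) * F₂) := by
    have h1 : L (fun t s => f x y * 1 - f t s) x y
        ≤ L (fun t s => ω * 1 + ((ω * δ₁⁻¹) * |t - x| + (ω * δ₂⁻¹) * |s - y|)) x y := by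
      apply hmono
      intro t s ht hs
      have h2 := hpt t s ht hs
      have h3 := neg_abs_le (f t s - f x y)
      rw [hωdef]; nlinarith [h2, h3]
    rw [hLsub, hexp] at h1
    rw [hLconst] at h1
    exact h1
  -- Cauchy–Schwarz estimates
  have hCS1 : F₁ ≤ Real.sqrt (A * B) := by
    have hq : ∀ r : ℝ, 0 ≤ A * (r * r) + (-2 * F₁) * r + B := by
      intro r
      have h0 := hpos (fun t s => (r - |t - x|) ^ 2) (fun _ _ _ _ => sq_nonneg _) x y hx hy
      have he : L (fun t s => (r - |t - x|) ^ 2) x y = A * (r * r) + (-2 * F₁) * r + B := by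
        have h1 : (fun (t s : ℝ) => (r - |t - x|) ^ 2)
            = (fun (t s : ℝ) => r ^ 2 * 1 + ((-2 * r) * |t - x| + 1 * (t - x) ^ 2)) := by
          funext t s
          rw [← sq_abs (t - x)]; ring
        rw [h1, hadd, hadd, hsmul, hsmul, hsmul]
        rw [← hAdef, ← hBdef, ← hF1def]; ring
      rw [he] at h0; exact h0
    have hd := discrim_le_zero hq
    rw [discrim] at hd
    have hsq : F₁ ^ 2 ≤ A * B := by nlinarith
    calc F₁ = Real.sqrt (F₁ ^ 2) := (Real.sqrt_sq hF1).symm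
      _ ≤ Real.sqrt (A * B) := Real.sqrt_le_sqrt hsq
  have hCS2 : F₂ ≤ Real.sqrt (A * C) := by
    have hq : ∀ r : ℝ, 0 ≤ A * (r * r) + (-2 * F₂) * r + C := by
      intro r
      have h0 := hpos (fun t s => (r - |s - y|) ^ 2) (fun _ _ _ _ => sq_nonneg _) x y hx hy
      have he : L (fun t s => (r - |s - y|) ^ 2) x y = A * (r * r) + (-2 * F₂) * r + C := by
        have h1 : (fun (t s : ℝ) => (r - |s - y|) ^ 2)
            = (fun (t s : ℝ) => r ^ 2 * 1 + ((-2 * r) * |s - y| + 1 * (s - y) ^ 2)) := by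
          funext t s
          rw [← sq_abs (s - y)]; ring
        rw [h1, hadd, hadd, hsmul, hsmul, hsmul]
        rw [← hAdef, ← hCdef, ← hF2def]; ring
      rw [he] at h0; exact h0
    have hd := discrim_le_zero hq
    rw [discrim] at hd
    have hsq : F₂ ^ 2 ≤ A * C := by nlinarith
    calc F₂ = Real.sqrt (F₂ ^ 2) := (Real.sqrt_sq hF2).symm
      _ ≤ Real.sqrt (A * C) := Real.sqrt_le_sqrt hsq
  -- assemble
  have habs : |L f x y - f x y| ≤ |L f x y - f x y * A| + |f x y * A - f x y| :=
    abs_sub_le _ _ _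
  have h2 : |f x y * A - f x y| = |A - 1| * |f x y| := by
    have he : f x y * A - f x y = (A - 1) * f x y := by ring
    rw [he, abs_mul]
  have h3 : |L f x y - f x y * A| ≤ ω * A + ((ω * δ₁⁻¹) * F₁ + (ω * δ₂⁻¹) * F₂) :=
    abs_sub_le_iff.mpr ⟨hub, hlb⟩
  have e1 : (ω * δ₁⁻¹) * F₁ ≤ (ω * δ₁⁻¹) * Real.sqrt (A * B) :=
    mul_le_mul_of_nonneg_left hCS1 (by positivity)
  have e2 : (ω * δ₂⁻¹) * F₂ ≤ (ω * δ₂⁻¹) * Real.sqrt (A * C) :=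
    mul_le_mul_of_nonneg_left hCS2 (by positivity)
  have e3 : 0 ≤ (δ₁⁻¹ * δ₂⁻¹ * Real.sqrt (A ^ 2 * B * C)) * ω := by positivity
  have hfinal : ω * A + ((ω * δ₁⁻¹) * F₁ + (ω * δ₂⁻¹) * F₂)
      ≤ (A + δ₁⁻¹ * Real.sqrt (A * B) + δ₂⁻¹ * Real.sqrt (A * C)
          + δ₁⁻¹ * δ₂⁻¹ * Real.sqrt (A ^ 2 * B * C)) * ω := by
    nlinarith [e1, e2, e3]
  linarith [habs, h3, hfinal, h2.le, h2.ge]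
end
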